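/- arXiv:1102.1842 — 2 statements merged into one kernel-verified Lean document; each statement's English description precedes it below -/
import Mathlib

section
/- Let {M_t, t≥0} be a square-integrable martingale with M₀ = 0 and increments Z_n = M_n − M_{n-1} satisfying sup_n E[Z_n²] < ∞ and E[⟨M⟩_N]/N → σ². Then for every ε > 0, lim_{N→∞} P[ sup_{T∈[N,N+1)} |M_T/√T − M_N/√N| ≥ ε ] = 0. -/
/-!
Write `M_T/√T - M_N/√N = (M_T - M_N)/√T - M_N (1/√N - 1/√T)`. The second term is at most
`|M_N| N^{-3/2}`, and `E[M_N²] ≤ N² B` by Cauchy–Schwarz on the increments, so Chebyshev bounds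
its probability by `O(1/N)`. For the first term, right-continuity reduces the supremum over
`[N, N + 1)` to dyadic times, where Doob's maximal inequality for the submartingale
`(M_t - M_N)²` bounds its probability by `E[(M_{N+1} - M_N)²] / (ε² N) = O(1/N)`.
-/

open MeasureTheory Filter
open scoped Topology NNReal ENNReal

namespace NNReal

theorem exists_add_nat_div_two_pow_mem_Ico {a x y : ℝ≥0} (hax : a ≤ x) (hxy : x < y)
    (hy : y ≤ a + 1) : ∃ m k : ℕ, k ≤ 2 ^ m ∧ a + k / 2 ^ m ∈ Set.Ico x y := by
  obtain ⟨m, hm⟩ := exists_pow_lt_of_lt_one (tsub_pos_of_lt hxy) (by norm_num : (2⁻¹ : ℝ≥0) < 1)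
  set k := ⌈(x - a) * 2 ^ m⌉₊
  have hxk : x ≤ a + k / 2 ^ m := by
    rw [← tsub_le_iff_left, le_div_iff₀ (by positivity)]
    exact Nat.le_ceil _
  have hky : (k : ℝ≥0) / 2 ^ m < y - a :=
    calc (k : ℝ≥0) / 2 ^ m < ((x - a) * 2 ^ m + 1) / 2 ^ m := by
          gcongr; exact Nat.ceil_lt_add_one zero_le
      _ = (x - a) + 2⁻¹ ^ m := by
          rw [add_div, mul_div_cancel_right₀ _ (by positivity), one_div, inv_pow]
      _ < (x - a) + (y - x) := by gcongr
      _ = y - a := by rw [add_comm, tsub_add_tsub_cancel hxy.le hax]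
  have hk : k ≤ 2 ^ m := by
    have : (k : ℝ≥0) / 2 ^ m < 1 := hky.trans_le (tsub_le_iff_left.2 hy)
    exact_mod_cast ((div_lt_one (by positivity)).1 this).le
  exact ⟨m, k, hk, hxk, lt_tsub_iff_left.1 hky⟩

end NNReal

theorem one_div_sqrt_sub_one_div_sqrt_le {s t : ℝ} (hs : 0 < s) (hst : s ≤ t) (ht : t ≤ s + 1) :
    1 / √s - 1 / √t ≤ 1 / (s * √s) := by
  have hp := Real.sqrt_pos.2 hs
  have hpq := Real.sqrt_le_sqrt hst
  have hq := hp.trans_le hpq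
  have hq2 := Real.sq_sqrt (hs.le.trans hst)
  have hp2 := Real.sq_sqrt hs.le
  rw [div_sub_div _ _ hp.ne' hq.ne', div_le_div_iff₀ (by positivity) (by positivity)]
  -- `(√t - √s) (√t + √s) = t - s ≤ 1`
  nlinarith [mul_le_mul_of_nonneg_left hpq hp.le, mul_nonneg (sub_nonneg.2 hpq) hp.le,
    mul_nonneg (mul_nonneg (sub_nonneg.2 hpq) hp.le) hp.le]

theorem abs_div_sqrt_sub_div_sqrt_le {s t : ℝ} (hs : 0 < s) (hst : s ≤ t) (ht : t ≤ s + 1)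
    (x y : ℝ) : |x / √t - y / √s| ≤ |x - y| / √s + |y| / (s * √s) := by
  have hp := Real.sqrt_pos.2 hs
  have hpq := Real.sqrt_le_sqrt hst
  have hq : 0 < √t := hp.trans_le hpq
  have hgap : 0 ≤ 1 / √s - 1 / √t := sub_nonneg.2 (one_div_le_one_div_of_le hp hpq)
  calc |x / √t - y / √s| = |(x - y) / √t - y * (1 / √s - 1 / √t)| := by
        congr 1; field_simp; ring
    _ ≤ |x - y| / √t + |y| * (1 / √s - 1 / √t) := by
        refine (abs_sub _ _).trans_eq ?_
        rw [abs_div, abs_of_pos hq, abs_mul, abs_of_nonneg hgap]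
    _ ≤ |x - y| / √s + |y| / (s * √s) := by
        rw [← mul_one_div (|y|)]
        gcongr
        exact one_div_sqrt_sub_one_div_sqrt_le hs hst ht

theorem exists_lt_abs_sub_add_nat_div_two_pow {g : ℝ≥0 → ℝ} {a T : ℝ≥0} {c : ℝ}
    (hg : ContinuousWithinAt g (Set.Ici T) T) (haT : a ≤ T) (hT : T < a + 1)
    (hc : c < |g T - g a|) : ∃ m k : ℕ, k ≤ 2 ^ m ∧ c < |g (a + k / 2 ^ m) - g a| := by
  have hev : ∀ᶠ s in 𝓝[≥] T, c < |g s - g a| :=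
    (hg.sub continuousWithinAt_const).abs.eventually (eventually_gt_nhds hc)
  obtain ⟨u, hTu, hu⟩ := (nhdsGE_basis_of_exists_gt ⟨a + 1, hT⟩).eventually_iff.mp hev
  obtain ⟨m, k, hk, hmem⟩ :=
    NNReal.exists_add_nat_div_two_pow_mem_Ico haT (lt_min hTu hT) (min_le_right _ _)
  exact ⟨m, k, hk, hu ⟨hmem.1, hmem.2.trans_le (min_le_left _ _)⟩⟩

namespace MeasureTheory

variable {Ω : Type*} {m0 : MeasurableSpace Ω} {μ : Measure Ω}

def Filtration.reindex {ι κ : Type*} [Preorder ι] [Preorder κ] (ℱ : Filtration ι m0)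
    {τ : κ → ι} (hτ : Monotone τ) : Filtration κ m0 where
  seq k := ℱ (τ k)
  mono' _ _ h := ℱ.mono (hτ h)
  le' _ := ℱ.le _

theorem Martingale.reindex {ι κ E : Type*} [Preorder ι] [Preorder κ] [NormedAddCommGroup E]
    [NormedSpace ℝ E] [CompleteSpace E] {ℱ : Filtration ι m0} {f : ι → Ω → E}
    (hf : Martingale f ℱ μ) {τ : κ → ι} (hτ : Monotone τ) :
    Martingale (fun k => f (τ k)) (ℱ.reindex hτ) μ :=
  ⟨fun k => hf.stronglyAdapted (τ k), fun _ _ h => hf.condExp_ae_eq (hτ h)⟩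

theorem Martingale.submartingale_sq {ι : Type*} [Preorder ι] [IsFiniteMeasure μ]
    {ℱ : Filtration ι m0} {f : ι → Ω → ℝ} (hf : Martingale f ℱ μ)
    (hL2 : ∀ i, MemLp (f i) 2 μ) : Submartingale (fun i ω => f i ω ^ 2) ℱ μ := by
  refine ⟨fun i => (hf.stronglyAdapted i).pow 2, fun i j hij => ?_, fun i => (hL2 i).integrable_sq⟩
  -- conditional Jensen for `x ↦ x ^ 2`
  filter_upwards [hf.condExp_ae_eq hij, (even_two.convexOn_pow (𝕜 := ℝ)).map_condExp_le_univ
    (ℱ.le i) (continuous_pow 2).lowerSemicontinuous (hf.integrable j) (hL2 j).integrable_sq]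
    with ω hfj hjensen
  simp only [Function.comp_apply, hfj] at hjensen
  exact hjensen

theorem measure_le_abs_le_integral_sq_div [IsFiniteMeasure μ] {X : Ω → ℝ} (hX : MemLp X 2 μ)
    {δ : ℝ} (hδ : 0 < δ) :
    μ {ω | δ ≤ |X ω|} ≤ ENNReal.ofReal ((∫ ω, X ω ^ 2 ∂μ) / δ ^ 2) := by
  have hset : {ω | δ ≤ |X ω|} = {ω | δ ^ 2 ≤ X ω ^ 2} := by
    ext ω
    rw [Set.mem_ofPred_eq, Set.mem_ofPred_eq, ← sq_abs (X ω)]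
    exact (pow_le_pow_iff_left₀ hδ.le (abs_nonneg _) two_ne_zero).symm
  have hmarkov := mul_meas_ge_le_integral_of_nonneg (ae_of_all μ fun ω => sq_nonneg (X ω))
    hX.integrable_sq (δ ^ 2)
  rw [hset, ← ofReal_measureReal]
  exact ENNReal.ofReal_le_ofReal ((le_div_iff₀' (by positivity)).2 hmarkov)

theorem Martingale.measure_exists_le_abs_le [IsFiniteMeasure μ] {ℱ : Filtration ℕ m0}
    {f : ℕ → Ω → ℝ} (hf : Martingale f ℱ μ) (hL2 : ∀ k, MemLp (f k) 2 μ) (n : ℕ) {δ : ℝ}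
    (hδ : 0 < δ) :
    μ {ω | ∃ k ≤ n, δ ≤ |f k ω|} ≤ ENNReal.ofReal ((∫ ω, f n ω ^ 2 ∂μ) / δ ^ 2) := by
  set ε : ℝ≥0 := (δ ^ 2).toNNReal
  have hε : (ε : ℝ) = δ ^ 2 := Real.coe_toNNReal _ (sq_nonneg δ)
  set S := {ω | (ε : ℝ) ≤ (Finset.range (n + 1)).sup' Finset.nonempty_range_add_one
    fun k => f k ω ^ 2}
  have hsub : {ω | ∃ k ≤ n, δ ≤ |f k ω|} ⊆ S := by
    rintro ω ⟨k, hkn, hk⟩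
    refine le_trans ?_ (Finset.le_sup' (fun k => f k ω ^ 2) (Finset.mem_range_succ_iff.2 hkn))
    rw [hε, ← sq_abs (f k ω)]
    exact pow_le_pow_left₀ hδ.le hk 2
  have hmax := maximal_ineq (hf.submartingale_sq hL2) (fun k ω => sq_nonneg (f k ω)) (ε := ε) n
  have hS : ∫ ω in S, f n ω ^ 2 ∂μ ≤ ∫ ω, f n ω ^ 2 ∂μ :=
    setIntegral_le_integral (hL2 n).integrable_sq (ae_of_all μ fun ω => sq_nonneg (f n ω))
  calc μ {ω | ∃ k ≤ n, δ ≤ |f k ω|} ≤ μ S := measure_mono hsub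
    _ ≤ ENNReal.ofReal (∫ ω in S, f n ω ^ 2 ∂μ) / ε := by
      rw [ENNReal.le_div_iff_mul_le (by simp [ε, hδ.ne']) (by simp), mul_comm]
      exact hmax
    _ ≤ ENNReal.ofReal (∫ ω, f n ω ^ 2 ∂μ) / ε := by gcongr
    _ = ENNReal.ofReal ((∫ ω, f n ω ^ 2 ∂μ) / δ ^ 2) := by
      rw [ENNReal.ofReal_div_of_pos (by positivity)]
      rfl

theorem Martingale.measure_exists_le_abs_sub_le {ι : Type*} [Preorder ι] [IsFiniteMeasure μ]
    {ℱ : Filtration ι m0} {f : ι → Ω → ℝ} (hf : Martingale f ℱ μ) (hL2 : ∀ i, MemLp (f i) 2 μ)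
    {τ : ℕ → ι} (hτ : Monotone τ) (n : ℕ) {δ : ℝ} (hδ : 0 < δ) :
    μ {ω | ∃ k ≤ n, δ ≤ |f (τ k) ω - f (τ 0) ω|} ≤
      ENNReal.ofReal ((∫ ω, (f (τ n) ω - f (τ 0) ω) ^ 2 ∂μ) / δ ^ 2) :=
  ((hf.reindex hτ).sub (martingale_const_fun _ μ (hf.stronglyAdapted (τ 0)) (hf.integrable _))
    ).measure_exists_le_abs_le (fun _ => (hL2 _).sub (hL2 _)) n hδ

theorem integral_sq_le_sq_mul_of_integral_sq_sub_le {X : ℕ → Ω → ℝ} (hL2 : ∀ k, MemLp (X k) 2 μ)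
    (h0 : ∀ ω, X 0 ω = 0) {B : ℝ} (hB : ∀ k, ∫ ω, (X (k + 1) ω - X k ω) ^ 2 ∂μ ≤ B) (n : ℕ) :
    ∫ ω, X n ω ^ 2 ∂μ ≤ n ^ 2 * B := by
  have hint : ∀ k, Integrable (fun ω => (X (k + 1) ω - X k ω) ^ 2) μ :=
    fun k => ((hL2 _).sub (hL2 _)).integrable_sq
  -- Cauchy–Schwarz on the telescoping sum `X n = ∑ (X (k + 1) - X k)`
  have hcs : ∀ ω, X n ω ^ 2 ≤ n * ∑ k ∈ Finset.range n, (X (k + 1) ω - X k ω) ^ 2 := fun ω => by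
    simpa [Finset.sum_range_sub (X · ω), h0] using
      sq_sum_le_card_mul_sum_sq (s := Finset.range n) (f := fun k => X (k + 1) ω - X k ω)
  calc ∫ ω, X n ω ^ 2 ∂μ
      ≤ ∫ ω, n * ∑ k ∈ Finset.range n, (X (k + 1) ω - X k ω) ^ 2 ∂μ :=
        integral_mono (hL2 n).integrable_sq
          ((integrable_finsetSum _ fun k _ => hint k).const_mul _) hcs
    _ = n * ∑ k ∈ Finset.range n, ∫ ω, (X (k + 1) ω - X k ω) ^ 2 ∂μ := by
        rw [integral_const_mul, integral_finsetSum _ fun k _ => hint k]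
    _ ≤ n * (n * B) := by
        gcongr
        simpa using Finset.sum_le_sum fun k (_ : k ∈ Finset.range n) => hB k
    _ = n ^ 2 * B := by ring

section ContinuousTime

variable {ℱ : Filtration ℝ≥0 m0} {M : ℝ≥0 → Ω → ℝ}

theorem Martingale.measure_iUnion_dyadic_le [IsFiniteMeasure μ] (hM : Martingale M ℱ μ)
    (hL2 : ∀ t, MemLp (M t) 2 μ) (a : ℝ≥0) {δ : ℝ} (hδ : 0 < δ) :
    μ (⋃ m : ℕ, {ω | ∃ k : ℕ, k ≤ 2 ^ m ∧ δ ≤ |M (a + k / 2 ^ m) ω - M a ω|}) ≤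
      ENNReal.ofReal ((∫ ω, (M (a + 1) ω - M a ω) ^ 2 ∂μ) / δ ^ 2) := by
  have hmono : Monotone fun m : ℕ =>
      {ω | ∃ k : ℕ, k ≤ 2 ^ m ∧ δ ≤ |M (a + k / 2 ^ m) ω - M a ω|} := by
    refine monotone_nat_of_le_succ fun m ω ⟨k, hk, hω⟩ => ⟨2 * k, by omega, ?_⟩
    have : (k : ℝ≥0) / 2 ^ m = ((2 * k : ℕ) : ℝ≥0) / 2 ^ (m + 1) := by
      push_cast; field_simp; ring
    rwa [← this]
  rw [hmono.measure_iUnion]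
  refine iSup_le fun m => ?_
  have hτ : Monotone fun k : ℕ => a + (k : ℝ≥0) / 2 ^ m := fun i j h => by dsimp only; gcongr
  simpa using hM.measure_exists_le_abs_sub_le hL2 hτ (2 ^ m) hδ

theorem setOf_le_iSup_abs_div_sqrt_sub_subset
    (hrc : ∀ ω, ∀ t : ℝ≥0, ContinuousWithinAt (fun s => M s ω) (Set.Ici t) t)
    {ε : ℝ} (hε : 0 < ε) {N : ℕ} (hN : 1 ≤ N) :
    {ω | ε ≤ ⨆ T : (Set.Ico (N : ℝ≥0) ((N : ℝ≥0) + 1)),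
        |M (T : ℝ≥0) ω / Real.sqrt ((T : ℝ≥0) : ℝ) - M (N : ℝ≥0) ω / Real.sqrt N|} ⊆
      (⋃ m : ℕ, {ω | ∃ k : ℕ, k ≤ 2 ^ m ∧ ε / 4 * √N ≤ |M (N + k / 2 ^ m) ω - M N ω|}) ∪
        {ω | ε / 4 * (N * √N) ≤ |M N ω|} := by
  intro ω hω
  have : Nonempty (Set.Ico (N : ℝ≥0) ((N : ℝ≥0) + 1)) := ⟨⟨N, le_rfl, lt_add_one _⟩⟩
  obtain ⟨⟨T, hNT, hTN⟩, hT⟩ := exists_lt_of_lt_ciSup ((half_lt_self hε).trans_le hω)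
  have hN0 : (0 : ℝ) < N := by exact_mod_cast hN
  have hdecomp := abs_div_sqrt_sub_div_sqrt_le (t := T) hN0 (by exact_mod_cast hNT)
    (by exact_mod_cast hTN.le) (M T ω) (M N ω)
  by_cases hlarge : ε / 4 * (N * √N) ≤ |M N ω|
  · exact Or.inr hlarge
  have hsmall : |M N ω| / (N * √N) < ε / 4 := by
    rw [div_lt_iff₀ (by positivity)]
    exact not_le.1 hlarge
  have hincr : ε / 4 < |M T ω - M N ω| / √N := by linarith
  rw [lt_div_iff₀ (by positivity)] at hincr
  obtain ⟨m, k, hk, hlt⟩ := exists_lt_abs_sub_add_nat_div_two_pow (hrc ω T) hNT hTN hincr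
  exact Or.inl (Set.mem_iUnion.2 ⟨m, k, hk, hlt.le⟩)

theorem Martingale.measure_setOf_le_iSup_le [IsFiniteMeasure μ] (hM : Martingale M ℱ μ)
    (hM0 : ∀ ω, M 0 ω = 0)
    (hrc : ∀ ω, ∀ t : ℝ≥0, ContinuousWithinAt (fun s => M s ω) (Set.Ici t) t)
    (hL2 : ∀ t, MemLp (M t) 2 μ) {B : ℝ} (hB : ∀ k : ℕ, ∫ ω, (M (k + 1) ω - M k ω) ^ 2 ∂μ ≤ B)
    {ε : ℝ} (hε : 0 < ε) {N : ℕ} (hN : 1 ≤ N) :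
    μ {ω | ε ≤ ⨆ T : (Set.Ico (N : ℝ≥0) ((N : ℝ≥0) + 1)),
        |M (T : ℝ≥0) ω / Real.sqrt ((T : ℝ≥0) : ℝ) - M (N : ℝ≥0) ω / Real.sqrt N|} ≤
      ENNReal.ofReal (32 * B / ε ^ 2 / N) := by
  have hN0 : (0 : ℝ) < N := by exact_mod_cast hN
  have hB0 : 0 ≤ B := (integral_nonneg fun _ => sq_nonneg _).trans (hB 0)
  have hmoment : ∫ ω, M N ω ^ 2 ∂μ ≤ N ^ 2 * B :=
    integral_sq_le_sq_mul_of_integral_sq_sub_le (X := fun k : ℕ => M k) (fun _ => hL2 _)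
      (by simpa using hM0) (fun k => by simpa using hB k) N
  calc _ ≤ μ (⋃ m : ℕ, {ω | ∃ k : ℕ, k ≤ 2 ^ m ∧ ε / 4 * √N ≤ |M (N + k / 2 ^ m) ω - M N ω|}) +
        μ {ω | ε / 4 * (N * √N) ≤ |M N ω|} :=
        (measure_mono (setOf_le_iSup_abs_div_sqrt_sub_subset hrc hε hN)).trans
          (measure_union_le _ _)
    _ ≤ ENNReal.ofReal (B / (ε / 4 * √N) ^ 2) +
        ENNReal.ofReal (N ^ 2 * B / (ε / 4 * (N * √N)) ^ 2) := by
        gcongr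
        · exact (hM.measure_iUnion_dyadic_le hL2 N (by positivity)).trans
            (ENNReal.ofReal_le_ofReal (by gcongr; exact hB N))
        · exact (measure_le_abs_le_integral_sq_div (hL2 N) (by positivity)).trans
            (ENNReal.ofReal_le_ofReal (by gcongr))
    _ = ENNReal.ofReal (32 * B / ε ^ 2 / N) := by
        rw [← ENNReal.ofReal_add (by positivity) (by positivity)]
        congr 1
        field_simp
        rw [Real.sq_sqrt hN0.le]
        ring

end ContinuousTime

end MeasureTheory

theorem stmt_12_general {Ω : Type*} {m0 : MeasurableSpace Ω} (Pr : Measure Ω)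
    [IsProbabilityMeasure Pr]
    (𝒢 : MeasureTheory.Filtration ℝ≥0 m0)
    (M : ℝ≥0 → Ω → ℝ)
    (hmart : Martingale M 𝒢 Pr)
    (hM0 : ∀ ω, M 0 ω = 0)
    -- right-continuity of trajectories
    (hrc : ∀ ω, ∀ t : ℝ≥0, ContinuousWithinAt (fun s => M s ω) (Set.Ici t) t)
    (hsq : ∀ t : ℝ≥0, Integrable (fun ω => (M t ω) ^ 2) Pr)
    -- the increments Z_n = M_n − M_{n−1} have uniformly bounded second moments
    (hsup : ∃ B : ℝ, ∀ n : ℕ, 1 ≤ n →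
      ∫ ω, (M (n : ℝ≥0) ω - M ((n : ℝ≥0) - 1) ω) ^ 2 ∂Pr ≤ B) :
    ∀ ε > (0:ℝ), Tendsto (fun N : ℕ =>
        Pr {ω | ε ≤ ⨆ T : (Set.Ico (N : ℝ≥0) ((N : ℝ≥0) + 1)),
          |M (T : ℝ≥0) ω / Real.sqrt ((T : ℝ≥0) : ℝ) - M (N : ℝ≥0) ω / Real.sqrt N|})
      atTop (𝓝 (0 : ℝ≥0∞)) := by
  intro ε hε
  obtain ⟨B, hB⟩ := hsup
  have hL2 : ∀ t, MemLp (M t) 2 Pr := fun t => (memLp_two_iff_integrable_sq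
    ((hmart.stronglyAdapted t).mono (𝒢.le t)).aestronglyMeasurable).2 (hsq t)
  have hB' : ∀ k : ℕ, ∫ ω, (M (k + 1) ω - M k ω) ^ 2 ∂Pr ≤ B := fun k => by
    simpa using hB (k + 1) (Nat.le_add_left 1 k)
  have hbound : Tendsto (fun N : ℕ => ENNReal.ofReal (32 * B / ε ^ 2 / N)) atTop (𝓝 0) := by
    simpa using ENNReal.tendsto_ofReal (tendsto_const_div_atTop_nhds_zero_nat (32 * B / ε ^ 2))
  refine tendsto_of_tendsto_of_tendsto_of_le_of_le' tendsto_const_nhds hbound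
    (Eventually.of_forall fun _ => zero_le) ?_
  filter_upwards [eventually_ge_atTop 1] with N hN
  exact hmart.measure_setOf_le_iSup_le hM0 hrc hL2 hB' hε hN

theorem stmt_12 {Ω : Type*} {m0 : MeasurableSpace Ω} (Pr : Measure Ω)
    [IsProbabilityMeasure Pr]
    (𝒢 : MeasureTheory.Filtration ℝ≥0 m0)
    (M : ℝ≥0 → Ω → ℝ)
    (hmart : Martingale M 𝒢 Pr)
    (hM0 : ∀ ω, M 0 ω = 0)
    -- right-continuity of trajectories
    (hrc : ∀ ω, ∀ t : ℝ≥0, ContinuousWithinAt (fun s => M s ω) (Set.Ici t) t)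
    (hsq : ∀ t : ℝ≥0, Integrable (fun ω => (M t ω) ^ 2) Pr)
    -- the increments Z_n = M_n − M_{n−1} have uniformly bounded second moments
    (hsup : ∃ B : ℝ, ∀ n : ℕ, 1 ≤ n →
      ∫ ω, (M (n : ℝ≥0) ω - M ((n : ℝ≥0) - 1) ω) ^ 2 ∂Pr ≤ B)
    (σ : ℝ)
    -- `E[⟨M⟩_N]/N → σ²`, where `⟨M⟩_N = Σ_{k=1}^N E[Z_k²|F_{k-1}]`
    (hqv : Tendsto (fun N : ℕ =>
        (∫ ω, (∑ k ∈ Finset.Icc 1 N,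
          (Pr[fun ω' => (M (k : ℝ≥0) ω' - M ((k : ℝ≥0) - 1) ω') ^ 2|
              𝒢 ((k : ℝ≥0) - 1)]) ω) ∂Pr) / N)
      atTop (𝓝 (σ ^ 2))) :
    ∀ ε > (0:ℝ), Tendsto (fun N : ℕ =>
        Pr {ω | ε ≤ ⨆ T : (Set.Ico (N : ℝ≥0) ((N : ℝ≥0) + 1)),
          |M (T : ℝ≥0) ω / Real.sqrt ((T : ℝ≥0) : ℝ) - M (N : ℝ≥0) ω / Real.sqrt N|})
      atTop (𝓝 (0 : ℝ≥0∞)) :=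
  stmt_12_general Pr 𝒢 M hmart hM0 hrc hsq hsup
end

section
/- Let {X_t} be a Markov process on Polish E satisfying the Wasserstein contraction hypothesis with initial law μ₀ ∈ P₁(E) and invariant law μ* ∈ P₁(E). For a Lipschitz ψ and L > 0 define ψ^{(L)} := |ψ − ψ_L| where ψ_L is the truncation of ψ at level L. Then lim_{L→∞} limsup_{t→∞} E[ψ^{(L)}(X_t)] = 0. -/
/-!
Write `ψ^{(L)} = |ψ - ψ_L| = max (|ψ| - L) 0`; it is `K`-Lipschitz for every `L`. By Kantorovich
duality, contraction and invariance of `μ*`,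
`E[ψ^{(L)}(X_t)] ≤ ⟨μ*, ψ^{(L)}⟩ + K c e^{-γt} W₁(μ₀, μ*)`.
The second term vanishes as `t → ∞` uniformly in `L`, and the first as `L → ∞` by dominated
convergence, since `ψ^{(L)} ≤ |ψ|` is `μ*`-integrable.
-/

open MeasureTheory Filter
open scoped Topology

/-- Wasserstein-1 distance via Kantorovich duality: supremum over 1-Lipschitz functions. -/
noncomputable def wdist {E : Type*} [MetricSpace E] [MeasurableSpace E]
    (μ ν : Measure E) : ℝ :=
  ⨆ f : {f : E → ℝ // LipschitzWith 1 f}, |∫ x, f.1 x ∂μ - ∫ x, f.1 x ∂ν|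

/-- `μ ∈ P₁(E)`: a Borel probability measure with finite first moment. -/
def memP1 {E : Type*} [MetricSpace E] [MeasurableSpace E] (x₀ : E) (μ : Measure E) : Prop :=
  IsProbabilityMeasure μ ∧ Integrable (fun x => dist x x₀) μ

lemma abs_sub_max_neg_min_eq {L : ℝ} (hL : 0 ≤ L) (y : ℝ) :
    |y - max (-L) (min L y)| = max (|y| - L) 0 := by
  grind [abs_of_nonneg, abs_of_nonpos]

lemma LipschitzWith.max_abs_sub_const {α : Type*} [PseudoMetricSpace α] {K : NNReal}
    {ψ : α → ℝ} (hψ : LipschitzWith K ψ) (L : ℝ) :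
    LipschitzWith K fun x => max (|ψ x| - L) 0 := by
  refine LipschitzWith.max_const (LipschitzWith.of_dist_le_mul fun x y => ?_) 0
  calc dist (|ψ x| - L) (|ψ y| - L) = |(|ψ x| - |ψ y|)| := by
        rw [Real.dist_eq, sub_sub_sub_cancel_right]
    _ ≤ dist (ψ x) (ψ y) := abs_abs_sub_abs_le_abs_sub _ _
    _ ≤ K * dist x y := hψ.dist_le_mul x y

lemma tendsto_integral_max_abs_sub_const_atTop {α : Type*} [MeasurableSpace α] {μ : Measure α}
    {ψ : α → ℝ} (hψ : Integrable ψ μ) :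
    Tendsto (fun L : ℝ => ∫ x, max (|ψ x| - L) 0 ∂μ) atTop (𝓝 0) := by
  have hlim : ∀ x, Tendsto (fun L : ℝ => max (|ψ x| - L) 0) atTop (𝓝 0) := fun x =>
    tendsto_const_nhds.congr' <| (eventually_ge_atTop |ψ x|).mono fun L hL => by
      simp [max_eq_right (sub_nonpos.2 hL)]
  simpa using tendsto_integral_filter_of_dominated_convergence (fun x => |ψ x|)
    (Eventually.of_forall fun L => by fun_prop)
    ((eventually_ge_atTop 0).mono fun L hL => ae_of_all _ fun x => by
      rw [Real.norm_eq_abs, abs_of_nonneg (le_max_right _ _)]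
      exact max_le (by linarith) (abs_nonneg _))
    hψ.abs (ae_of_all _ hlim)

section Wasserstein

variable {E : Type*} [MetricSpace E] [MeasurableSpace E] [BorelSpace E] {x₀ : E}
  {μ ν : Measure E} {K : NNReal} {f : E → ℝ}

lemma memP1.integrable_of_lipschitzWith (hμ : memP1 x₀ μ) (hf : LipschitzWith K f) :
    Integrable f μ := by
  have := hμ.1
  refine Integrable.mono' ((integrable_const |f x₀|).add (hμ.2.const_mul K))
    hf.continuous.aestronglyMeasurable (ae_of_all _ fun x => ?_)
  have := hf.dist_le_mul x x₀
  rw [Real.dist_eq] at this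
  simp only [Real.norm_eq_abs, Pi.add_apply]
  linarith [abs_sub_abs_le_abs_sub (f x) (f x₀)]

lemma memP1.abs_integral_sub_le_integral_dist (hμ : memP1 x₀ μ) (hf : LipschitzWith 1 f) :
    |∫ x, f x ∂μ - f x₀| ≤ ∫ x, dist x x₀ ∂μ := by
  have := hμ.1
  have hsub : ∫ x, (f x - f x₀) ∂μ = ∫ x, f x ∂μ - f x₀ := by
    simp [integral_sub (hμ.integrable_of_lipschitzWith hf) (integrable_const (f x₀))]
  rw [← hsub, ← Real.norm_eq_abs]
  refine norm_integral_le_of_norm_le hμ.2 (ae_of_all _ fun x => ?_)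
  simpa [← Real.dist_eq] using hf.dist_le_mul x x₀

-- Without this bound the `⨆` defining `wdist` would take the junk value `0`.
lemma bddAbove_range_abs_integral_sub (hμ : memP1 x₀ μ) (hν : memP1 x₀ ν) :
    BddAbove (Set.range fun f : {f : E → ℝ // LipschitzWith 1 f} =>
      |∫ x, f.1 x ∂μ - ∫ x, f.1 x ∂ν|) := by
  refine ⟨∫ x, dist x x₀ ∂μ + ∫ x, dist x x₀ ∂ν, ?_⟩
  rintro r ⟨⟨f, hf⟩, rfl⟩
  calc |∫ x, f x ∂μ - ∫ x, f x ∂ν| ≤ |∫ x, f x ∂μ - f x₀| + |∫ x, f x ∂ν - f x₀| := by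
        simpa only [abs_sub_comm (f x₀)] using abs_sub_le (∫ x, f x ∂μ) (f x₀) (∫ x, f x ∂ν)
    _ ≤ _ := add_le_add (hμ.abs_integral_sub_le_integral_dist hf)
        (hν.abs_integral_sub_le_integral_dist hf)

lemma abs_integral_sub_le_wdist (hμ : memP1 x₀ μ) (hν : memP1 x₀ ν) (hf : LipschitzWith 1 f) :
    |∫ x, f x ∂μ - ∫ x, f x ∂ν| ≤ wdist μ ν :=
  le_ciSup (bddAbove_range_abs_integral_sub hμ hν) (⟨f, hf⟩ : {f : E → ℝ // LipschitzWith 1 f})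

lemma abs_integral_sub_le_mul_wdist (hμ : memP1 x₀ μ) (hν : memP1 x₀ ν) (hf : LipschitzWith K f) :
    |∫ x, f x ∂μ - ∫ x, f x ∂ν| ≤ K * wdist μ ν := by
  rcases eq_or_ne K 0 with rfl | hK
  · have := hμ.1
    have := hν.1
    have hconst : ∀ x, f x = f x₀ := fun x => dist_le_zero.1 (by simpa using hf.dist_le_mul x x₀)
    simp [hconst]
  have hscaled : LipschitzWith 1 fun x => (K : ℝ)⁻¹ * f x :=
    LipschitzWith.of_dist_le_mul fun x y => by
      rw [Real.dist_eq, ← mul_sub, abs_mul, abs_of_pos (by positivity), ← Real.dist_eq,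
        NNReal.coe_one, one_mul, inv_mul_le_iff₀ (by positivity)]
      exact hf.dist_le_mul x y
  have := abs_integral_sub_le_wdist hμ hν hscaled
  rw [integral_const_mul, integral_const_mul, ← mul_sub, abs_mul, abs_of_pos (by positivity),
    inv_mul_le_iff₀ (by positivity)] at this
  exact this

end Wasserstein

lemma exists_forall_ge_lt_of_le_add {g : ℝ → ℝ → ℝ} {a b : ℝ → ℝ}
    (ha : Tendsto a atTop (𝓝 0)) (hb : Tendsto b atTop (𝓝 0))
    (hg : ∀ᶠ L in atTop, ∀ᶠ t in atTop, g L t ≤ a L + b t) :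
    ∀ ε > (0 : ℝ), ∃ L₀ : ℝ, ∀ L : ℝ, L₀ ≤ L → ∃ T : ℝ, ∀ t : ℝ, T ≤ t → g L t < ε := by
  intro ε hε
  have hb' := hb.eventually (gt_mem_nhds (half_pos hε))
  refine eventually_atTop.1 ((hg.and (ha.eventually (gt_mem_nhds (half_pos hε)))).mono ?_)
  rintro L ⟨hgL, haL⟩
  refine eventually_atTop.1 ((hgL.and hb').mono fun t ⟨hgt, hbt⟩ => ?_)
  linarith

theorem stmt_19_general {E Ω : Type*} [MetricSpace E]
    [MeasurableSpace E] [BorelSpace E]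
    {m0 : MeasurableSpace Ω} (Pr : Measure Ω)
    (X : ℝ → Ω → E) (hX : ∀ t : ℝ, Measurable (X t))
    (P : ℝ → Measure E → Measure E) (x₀ : E)
    (hpres : ∀ t : ℝ, 0 ≤ t → ∀ μ : Measure E, memP1 x₀ μ → memP1 x₀ (P t μ))
    (c γ : ℝ) (hγ : 0 < γ)
    (hcontr : ∀ t : ℝ, 0 ≤ t → ∀ μ ν : Measure E, memP1 x₀ μ → memP1 x₀ ν →
      wdist (P t μ) (P t ν) ≤ c * Real.exp (-γ * t) * wdist μ ν)
    (μ₀ : Measure E) (hμ₀ : memP1 x₀ μ₀)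
    (hlaw : ∀ t : ℝ, 0 ≤ t → Measure.map (X t) Pr = P t μ₀)
    (μstar : Measure E) (hstar : memP1 x₀ μstar)
    (hinv : ∀ t : ℝ, 0 ≤ t → P t μstar = μstar)
    (ψ : E → ℝ) (K : ℝ)
    (hψ : ∀ x y : E, |ψ x - ψ y| ≤ K * dist x y) :
    -- `lim_{L→∞} limsup_{t→∞} E[ |ψ(X_t) − ψ_L(X_t)| ] = 0`, where `ψ_L` is the
    -- truncation of `ψ` at level `L`
    ∀ ε > (0:ℝ), ∃ L₀ : ℝ, ∀ L : ℝ, L₀ ≤ L → ∃ T : ℝ, ∀ t : ℝ, T ≤ t →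
      ∫ ω, |ψ (X t ω) - max (-L) (min L (ψ (X t ω)))| ∂Pr < ε := by
  have hψ' : LipschitzWith K.toNNReal ψ := .of_dist_le_mul fun x y => by
    rw [Real.dist_eq, Real.coe_toNNReal']
    exact (hψ x y).trans (mul_le_mul_of_nonneg_right (le_max_left _ _) dist_nonneg)
  have hexp : Tendsto (fun t => Real.exp (-γ * t)) atTop (𝓝 0) :=
    Real.tendsto_exp_atBot.comp (tendsto_id.const_mul_atTop_of_neg (neg_lt_zero.2 hγ))
  refine exists_forall_ge_lt_of_le_add
    (b := fun t => K.toNNReal * (c * Real.exp (-γ * t) * wdist μ₀ μstar))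
    (tendsto_integral_max_abs_sub_const_atTop (hstar.integrable_of_lipschitzWith hψ'))
    (by simpa using ((hexp.const_mul c).mul_const _).const_mul _) ?_
  filter_upwards [eventually_ge_atTop 0] with L hL
  filter_upwards [eventually_ge_atTop 0] with t ht
  have hW : wdist (P t μ₀) μstar ≤ c * Real.exp (-γ * t) * wdist μ₀ μstar := by
    simpa [hinv t ht] using hcontr t ht μ₀ μstar hμ₀ hstar
  have hdual := abs_le.1 <| abs_integral_sub_le_mul_wdist (hpres t ht μ₀ hμ₀) hstar
    (hψ'.max_abs_sub_const L)
  simp_rw [abs_sub_max_neg_min_eq hL]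
  rw [← integral_map (hX t).aemeasurable (hψ'.max_abs_sub_const L).continuous.aestronglyMeasurable,
    hlaw t ht]
  linarith [hdual.2, mul_le_mul_of_nonneg_left hW K.toNNReal.coe_nonneg]

theorem stmt_19 {E Ω : Type*} [MetricSpace E] [CompleteSpace E]
    [TopologicalSpace.SeparableSpace E] [Nonempty E]
    [MeasurableSpace E] [BorelSpace E]
    {m0 : MeasurableSpace Ω} (Pr : Measure Ω) [IsProbabilityMeasure Pr]
    (X : ℝ → Ω → E) (hX : ∀ t : ℝ, Measurable (X t))
    (P : ℝ → Measure E → Measure E) (x₀ : E)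
    (hsemi : ∀ s t : ℝ, 0 ≤ s → 0 ≤ t → ∀ μ : Measure E, P (s + t) μ = P s (P t μ))
    (hpres : ∀ t : ℝ, 0 ≤ t → ∀ μ : Measure E, memP1 x₀ μ → memP1 x₀ (P t μ))
    (c γ : ℝ) (hc : 0 < c) (hγ : 0 < γ)
    (hcontr : ∀ t : ℝ, 0 ≤ t → ∀ μ ν : Measure E, memP1 x₀ μ → memP1 x₀ ν →
      wdist (P t μ) (P t ν) ≤ c * Real.exp (-γ * t) * wdist μ ν)
    (μ₀ : Measure E) (hμ₀ : memP1 x₀ μ₀)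
    (hlaw : ∀ t : ℝ, 0 ≤ t → Measure.map (X t) Pr = P t μ₀)
    (μstar : Measure E) (hstar : memP1 x₀ μstar)
    (hinv : ∀ t : ℝ, 0 ≤ t → P t μstar = μstar)
    (ψ : E → ℝ) (K : ℝ) (hK : 0 ≤ K)
    (hψ : ∀ x y : E, |ψ x - ψ y| ≤ K * dist x y) :
    -- `lim_{L→∞} limsup_{t→∞} E[ |ψ(X_t) − ψ_L(X_t)| ] = 0`, where `ψ_L` is the
    -- truncation of `ψ` at level `L`
    ∀ ε > (0:ℝ), ∃ L₀ : ℝ, ∀ L : ℝ, L₀ ≤ L → ∃ T : ℝ, ∀ t : ℝ, T ≤ t →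
      ∫ ω, |ψ (X t ω) - max (-L) (min L (ψ (X t ω)))| ∂Pr < ε :=
  stmt_19_general (m0 := m0) Pr X hX P x₀ hpres c γ hγ hcontr μ₀ hμ₀ hlaw μstar hstar hinv ψ K hψ
end
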